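/- arXiv:2305.11344 — 4 statements merged into one kernel-verified Lean document; each statement's English description precedes it below -/
import Mathlib

section
/- If R : X ↔ 𝒫Y is an inner deterministic multirelation and S : Y ↔ 𝒫Z is any multirelation, then the Peleg composition satisfies R ∗ S = {(a,C) | ∃ b, (a,{b}) ∈ R ∧ (b,C) ∈ S}; equivalently, R ∗ S equals the relational composition of α(R) with S. -/
universe u v w x

variable {X : Type u} {Y : Type v} {Z : Type w} {W : Type x}

/-- Relational composition. -/
def rcomp (R : Set (X × Y)) (S : Set (Y × Z)) : Set (X × Z) :=
  {p | ∃ b, (p.1, b) ∈ R ∧ (b, p.2) ∈ S}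

/-- Power transpose Λ. -/
def Lam (R : Set (X × Y)) : Set (X × Set Y) :=
  {p | p.2 = {b | (p.1, b) ∈ R}}

/-- α : postcomposition with the has-element relation. -/
def alphaM (S : Set (X × Set Y)) : Set (X × Y) :=
  {p | ∃ B, (p.1, B) ∈ S ∧ p.2 ∈ B}

/-- η : singleton embedding. -/
def etaM (R : Set (X × Y)) : Set (X × Set Y) :=
  {p | ∃ b, (p.1, b) ∈ R ∧ p.2 = {b}}

/-- Peleg composition. -/
def peleg (R : Set (X × Set Y)) (S : Set (Y × Set Z)) : Set (X × Set Z) :=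
  {p | ∃ B, (p.1, B) ∈ R ∧ ∃ f : Y → Set Z, (∀ b ∈ B, (b, f b) ∈ S) ∧ p.2 = ⋃ b ∈ B, f b}

/-- Outer deterministic: each element relates to exactly one set. -/
def OuterDet (R : Set (X × Set Y)) : Prop := ∀ a, ∃! B, (a, B) ∈ R

/-- Inner deterministic: every related set is a singleton. -/
def InnerDet (R : Set (X × Set Y)) : Prop := ∀ a B, (a, B) ∈ R → ∃ b, B = {b}

/-- Inner univalent: every related set is empty or a singleton. -/
def InnerUniv (R : Set (X × Set Y)) : Prop := ∀ a B, (a, B) ∈ R → B = ∅ ∨ ∃ b, B = {b}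

/-- The unit 1_X. -/
def oneM (X : Type u) : Set (X × Set X) := {p | p.2 = {p.1}}

/-- Identity relation. -/
def idR (X : Type u) : Set (X × X) := {p | p.1 = p.2}

/-- Hoare preorder ⊑↓. -/
def hle (R S : Set (X × Set Y)) : Prop := ∀ a A, (a, A) ∈ R → ∃ B, (a, B) ∈ S ∧ A ⊆ B

/-- Smyth preorder ⊑↑. -/
def sle (P Q : Set (X × Set Y)) : Prop := ∀ a B, (a, B) ∈ Q → ∃ A, (a, A) ∈ P ∧ A ⊆ B

/-- Down-closure. -/
def downCl (R : Set (X × Set Y)) : Set (X × Set Y) := {p | ∃ B, (p.1, B) ∈ R ∧ p.2 ⊆ B}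

/-- Atoms: pairs whose second component is a singleton. -/
def atomsM (X : Type u) (Y : Type v) : Set (X × Set Y) := {p | ∃ b, p.2 = {b}}

/-- Terminal part τ(R). -/
def tauM (R : Set (X × Set Y)) : Set (X × Set Y) := {p ∈ R | p.2 = ∅}

/-- Terminal part of R viewed as a multirelation into any other powerset. -/
def tauAs (R : Set (X × Set Y)) : Set (X × Set Z) := {p | (p.1, (∅ : Set Y)) ∈ R ∧ p.2 = ∅}

/-- Outer determinisation (fusion). -/
def deltaO (R : Set (X × Set Y)) : Set (X × Set Y) := Lam (alphaM R)

/-- Inner determinisation (fission). -/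
def deltaI (R : Set (X × Set Y)) : Set (X × Set Y) := etaM (alphaM R)

theorem mem_peleg_of_singleton_mem {R : Set (X × Set Y)} {S : Set (Y × Set Z)} {a : X} {b : Y}
    {C : Set Z} (hR : (a, {b}) ∈ R) (hS : (b, C) ∈ S) : (a, C) ∈ peleg R S :=
  ⟨{b}, hR, fun _ => C, fun _ hb' => by rwa [Set.mem_singleton_iff.mp hb'], by simp⟩

theorem mem_alphaM_iff_of_innerDet {R : Set (X × Set Y)} (hR : InnerDet R) {a : X} {b : Y} :
    (a, b) ∈ alphaM R ↔ (a, ({b} : Set Y)) ∈ R := by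
  constructor
  · rintro ⟨B, hB, hbB⟩
    obtain ⟨c, rfl⟩ := hR a B hB
    rwa [show b = c from hbB]
  · exact fun h => ⟨{b}, h, rfl⟩

theorem peleg_eq_of_innerDet {R : Set (X × Set Y)} (S : Set (Y × Set Z)) (hR : InnerDet R) :
    peleg R S = {p : X × Set Z | ∃ b, (p.1, ({b} : Set Y)) ∈ R ∧ (b, p.2) ∈ S} := by
  ext ⟨a, C⟩
  constructor
  · rintro ⟨B, hB, f, hf, rfl⟩
    obtain ⟨b, rfl⟩ := hR a B hB
    exact ⟨b, hB, by simpa using hf b rfl⟩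
  · rintro ⟨b, hb, hS⟩
    exact mem_peleg_of_singleton_mem hb hS

theorem rcomp_alphaM_eq_of_innerDet {R : Set (X × Set Y)} (S : Set (Y × Set Z)) (hR : InnerDet R) :
    rcomp (alphaM R) S = {p : X × Set Z | ∃ b, (p.1, ({b} : Set Y)) ∈ R ∧ (b, p.2) ∈ S} := by
  ext ⟨a, C⟩
  simp only [rcomp, Set.mem_ofPred_eq, mem_alphaM_iff_of_innerDet hR]

theorem stmt4 (R : Set (X × Set Y)) (S : Set (Y × Set Z)) (hR : InnerDet R) :
    peleg R S = {p : X × Set Z | ∃ b, (p.1, ({b} : Set Y)) ∈ R ∧ (b, p.2) ∈ S} ∧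
    peleg R S = rcomp (alphaM R) S :=
  ⟨peleg_eq_of_innerDet S hR,
    (peleg_eq_of_innerDet S hR).trans (rcomp_alphaM_eq_of_innerDet S hR).symm⟩
end

section
/- Galois connection between α and Λ with respect to the Hoare preorder: for any multirelation R : X ↔ 𝒫Y and relation T : X ↔ Y, α(R) ⊆ T if and only if R ⊑↓ Λ(T), where R ⊑↓ S means for every (a,A) ∈ R there exists (a,B) ∈ S with A ⊆ B. -/
universe u v w x

variable {X : Type u} {Y : Type v} {Z : Type w} {W : Type x}

theorem mem_Lam {T : Set (X × Y)} {a : X} {B : Set Y} :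
    (a, B) ∈ Lam T ↔ B = {b | (a, b) ∈ T} :=
  Iff.rfl

theorem alphaM_subset_iff {R : Set (X × Set Y)} {T : Set (X × Y)} :
    alphaM R ⊆ T ↔ ∀ a A, (a, A) ∈ R → A ⊆ {b | (a, b) ∈ T} :=
  ⟨fun h _ A hA _ hb => h ⟨A, hA, hb⟩, fun h _ ⟨A, hA, hb⟩ => h _ A hA hb⟩

theorem hle_Lam_iff {R : Set (X × Set Y)} {T : Set (X × Y)} :
    hle R (Lam T) ↔ ∀ a A, (a, A) ∈ R → A ⊆ {b | (a, b) ∈ T} := by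
  simp only [hle, mem_Lam, exists_eq_left]

theorem stmt11 (R : Set (X × Set Y)) (T : Set (X × Y)) :
    alphaM R ⊆ T ↔ hle R (Lam T) :=
  alphaM_subset_iff.trans hle_Lam_iff.symm
end

section
/- The inner deterministic multirelations are exactly the fixpoints of δᵢ = η ∘ α, and the outer deterministic multirelations are exactly the fixpoints of δₒ = Λ ∘ α: δᵢ(R) = R iff R is inner deterministic, and δₒ(R) = R iff R is outer deterministic. -/
universe u v w x

variable {X : Type u} {Y : Type v} {Z : Type w} {W : Type x}

theorem innerDet_etaM (T : Set (X × Y)) : InnerDet (etaM T) := by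
  rintro a _ ⟨b, -, rfl⟩
  exact ⟨b, rfl⟩

theorem etaM_alphaM_of_innerDet {R : Set (X × Set Y)} (h : InnerDet R) :
    etaM (alphaM R) = R := by
  ext ⟨a, B⟩
  constructor
  · rintro ⟨b, ⟨C, hC, hbC⟩, rfl⟩
    obtain ⟨c, rfl⟩ := h a C hC
    obtain rfl : b = c := hbC
    exact hC
  · intro hB
    obtain ⟨b, rfl⟩ := h a B hB
    exact ⟨b, ⟨{b}, hB, rfl⟩, rfl⟩

theorem outerDet_Lam (T : Set (X × Y)) : OuterDet (Lam T) :=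
  fun a => ⟨{b | (a, b) ∈ T}, rfl, fun _ h => h⟩

theorem alphaM_fiber_of_outerDet {R : Set (X × Set Y)} (h : OuterDet R) {a : X} {C : Set Y}
    (hC : (a, C) ∈ R) : {b | (a, b) ∈ alphaM R} = C := by
  ext b
  constructor
  · rintro ⟨D, hD, hbD⟩
    rwa [(h a).unique hD hC] at hbD
  · exact fun hb => ⟨C, hC, hb⟩

theorem Lam_alphaM_of_outerDet {R : Set (X × Set Y)} (h : OuterDet R) :
    Lam (alphaM R) = R := by
  ext ⟨a, B⟩
  obtain ⟨C, hC, -⟩ := h a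
  change B = {b | (a, b) ∈ alphaM R} ↔ _
  rw [alphaM_fiber_of_outerDet h hC]
  exact ⟨fun hBC => hBC ▸ hC, fun hB => (h a).unique hB hC⟩

theorem stmt15 (R : Set (X × Set Y)) :
    (deltaI R = R ↔ InnerDet R) ∧ (deltaO R = R ↔ OuterDet R) :=
  ⟨⟨fun h => h ▸ innerDet_etaM _, etaM_alphaM_of_innerDet⟩,
    ⟨fun h => h ▸ outerDet_Lam _, Lam_alphaM_of_outerDet⟩⟩
end

section
/- If R : X ↔ 𝒫Y is inner univalent, then for any multirelation S : Y ↔ 𝒫Z, the Peleg composition decomposes as R ∗ S = (α(R) ; S) ∪ τ(R), and consequently α(R ∗ S) = α(R) ; α(S). Furthermore, Peleg composition of inner univalent multirelations is inner univalent and associative on inner univalent multirelations. -/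
universe u v w x

variable {X : Type u} {Y : Type v} {Z : Type w} {W : Type x}

/-!
A pair `(a, {b}) ∈ R` makes the Peleg composition pick a single `(b, C) ∈ S`, so it acts as
relational composition through `α(R)`, while `(a, ∅) ∈ R` contributes only `(a, ∅)`, the terminal
part. Since `α` and `τ` distribute over unions and commute with relational precomposition, and the
decomposition preserves inner univalence, associativity reduces to associativity of `;`.
-/

lemma rcomp_assoc (R : Set (X × Y)) (S : Set (Y × Z)) (T : Set (Z × W)) :
    rcomp (rcomp R S) T = rcomp R (rcomp S T) := by
  ext ⟨a, d⟩
  simp only [rcomp, Set.mem_ofPred_eq]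
  tauto

lemma rcomp_union_right (R : Set (X × Y)) (S T : Set (Y × Z)) :
    rcomp R (S ∪ T) = rcomp R S ∪ rcomp R T := by
  ext ⟨a, c⟩
  simp only [rcomp, Set.mem_ofPred_eq, Set.mem_union]
  constructor
  · rintro ⟨b, hab, hbc | hbc⟩
    exacts [Or.inl ⟨b, hab, hbc⟩, Or.inr ⟨b, hab, hbc⟩]
  · rintro (⟨b, hab, hbc⟩ | ⟨b, hab, hbc⟩)
    exacts [⟨b, hab, Or.inl hbc⟩, ⟨b, hab, Or.inr hbc⟩]

lemma alphaM_union (R S : Set (X × Set Y)) : alphaM (R ∪ S) = alphaM R ∪ alphaM S := by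
  ext ⟨a, b⟩
  simp only [alphaM, Set.mem_ofPred_eq, Set.mem_union]
  constructor
  · rintro ⟨B, hR | hS, hb⟩
    exacts [Or.inl ⟨B, hR, hb⟩, Or.inr ⟨B, hS, hb⟩]
  · rintro (⟨B, hR, hb⟩ | ⟨B, hS, hb⟩)
    exacts [⟨B, Or.inl hR, hb⟩, ⟨B, Or.inr hS, hb⟩]

lemma alphaM_rcomp (R : Set (X × Y)) (S : Set (Y × Set Z)) :
    alphaM (rcomp R S) = rcomp R (alphaM S) := by
  ext ⟨a, c⟩
  simp only [alphaM, rcomp, Set.mem_ofPred_eq]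
  constructor
  · rintro ⟨C, ⟨b, hab, hbC⟩, hc⟩
    exact ⟨b, hab, C, hbC, hc⟩
  · rintro ⟨b, hab, C, hbC, hc⟩
    exact ⟨C, ⟨b, hab, hbC⟩, hc⟩

lemma alphaM_tauAs (R : Set (X × Set Y)) : alphaM (tauAs R : Set (X × Set Z)) = ∅ := by
  ext ⟨a, c⟩
  simp [alphaM, tauAs]

lemma tauAs_union (R S : Set (X × Set Y)) :
    (tauAs (R ∪ S) : Set (X × Set Z)) = tauAs R ∪ tauAs S := by
  ext ⟨a, C⟩
  simp only [tauAs, Set.mem_ofPred_eq, Set.mem_union]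
  tauto

lemma tauAs_rcomp (R : Set (X × Y)) (S : Set (Y × Set Z)) :
    (tauAs (rcomp R S) : Set (X × Set W)) = rcomp R (tauAs S) := by
  ext ⟨a, D⟩
  simp only [tauAs, rcomp, Set.mem_ofPred_eq]
  constructor
  · rintro ⟨⟨b, hab, hb⟩, hD⟩
    exact ⟨b, hab, hb, hD⟩
  · rintro ⟨b, hab, hb, hD⟩
    exact ⟨⟨b, hab, hb⟩, hD⟩

lemma tauAs_tauAs (R : Set (X × Set Y)) :
    (tauAs (tauAs R : Set (X × Set Z)) : Set (X × Set W)) = tauAs R := by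
  ext ⟨a, D⟩
  simp [tauAs]

lemma InnerUniv.union {R S : Set (X × Set Y)} (hR : InnerUniv R) (hS : InnerUniv S) :
    InnerUniv (R ∪ S) := by
  rintro a B (h | h)
  exacts [hR a B h, hS a B h]

lemma InnerUniv.rcomp (R : Set (X × Y)) {S : Set (Y × Set Z)} (hS : InnerUniv S) :
    InnerUniv (rcomp R S) := by
  rintro a C ⟨b, -, hbC⟩
  exact hS b C hbC

lemma innerUniv_tauAs (R : Set (X × Set Y)) : InnerUniv (tauAs R : Set (X × Set Z)) := by
  rintro a C ⟨-, rfl⟩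
  exact Or.inl rfl

section Peleg

variable {R : Set (X × Set Y)}

lemma peleg_eq_rcomp_alphaM_union_tauAs (S : Set (Y × Set Z)) (hR : InnerUniv R) :
    peleg R S = rcomp (alphaM R) S ∪ tauAs R := by
  ext ⟨a, C⟩
  simp only [peleg, rcomp, tauAs, alphaM, Set.mem_ofPred_eq, Set.mem_union]
  constructor
  · rintro ⟨B, hB, f, hf, rfl⟩
    rcases hR a B hB with rfl | ⟨b, rfl⟩
    · exact Or.inr (by simpa using hB)
    · exact Or.inl ⟨b, ⟨{b}, hB, rfl⟩, by simpa using hf b rfl⟩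
  · rintro (⟨b, ⟨B, hB, hbB⟩, hC⟩ | ⟨h, rfl⟩)
    · rcases hR a B hB with rfl | ⟨c, rfl⟩
      · exact absurd hbB (Set.notMem_empty b)
      · obtain rfl : b = c := hbB
        exact ⟨{b}, hB, fun _ => C, by simpa using hC, by simp⟩
    · exact ⟨∅, h, fun _ => ∅, by simp, by simp⟩

lemma alphaM_peleg (S : Set (Y × Set Z)) (hR : InnerUniv R) :
    alphaM (peleg R S) = rcomp (alphaM R) (alphaM S) := by
  rw [peleg_eq_rcomp_alphaM_union_tauAs S hR, alphaM_union, alphaM_rcomp, alphaM_tauAs,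
    Set.union_empty]

lemma InnerUniv.peleg (hR : InnerUniv R) {S : Set (Y × Set Z)} (hS : InnerUniv S) :
    InnerUniv (peleg R S) := by
  rw [peleg_eq_rcomp_alphaM_union_tauAs S hR]
  exact (hS.rcomp _).union (innerUniv_tauAs R)

lemma tauAs_peleg (S : Set (Y × Set Z)) (hR : InnerUniv R) :
    (tauAs (peleg R S) : Set (X × Set W)) = rcomp (alphaM R) (tauAs S) ∪ tauAs R := by
  rw [peleg_eq_rcomp_alphaM_union_tauAs S hR, tauAs_union, tauAs_rcomp, tauAs_tauAs]

lemma peleg_assoc (hR : InnerUniv R) {S : Set (Y × Set Z)} (hS : InnerUniv S)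
    (T : Set (Z × Set W)) : peleg (peleg R S) T = peleg R (peleg S T) := by
  rw [peleg_eq_rcomp_alphaM_union_tauAs T (hR.peleg hS), alphaM_peleg S hR, tauAs_peleg S hR,
    peleg_eq_rcomp_alphaM_union_tauAs _ hR, peleg_eq_rcomp_alphaM_union_tauAs T hS,
    rcomp_union_right, rcomp_assoc, Set.union_assoc]

end Peleg

theorem stmt18 (R : Set (X × Set Y)) (S : Set (Y × Set Z)) (T : Set (Z × Set W))
    (hR : InnerUniv R) :
    peleg R S = rcomp (alphaM R) S ∪ tauAs R ∧
    alphaM (peleg R S) = rcomp (alphaM R) (alphaM S) ∧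
    (InnerUniv S → InnerUniv (peleg R S)) ∧
    (InnerUniv S → InnerUniv T → peleg (peleg R S) T = peleg R (peleg S T)) :=
  ⟨peleg_eq_rcomp_alphaM_union_tauAs S hR, alphaM_peleg S hR, hR.peleg,
    fun hS _ => peleg_assoc hR hS T⟩
end
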